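/- For every pair of words u, v over the alphabet A = {0,1,…,d}, the expectation of the shuffle product is invariant under reversal: Ē(u⧢v) = Ē(|S|(u) ⧢ |S|(v)), where |S| denotes word reversal and Ē is extended linearly to K⟨A⟩. -/

import Mathlib

open Finsupp

/-- Words over the alphabet `A = {0,1,…,d}`. -/
abbrev Word (d : ℕ) : Type := List (Fin (d+1))

/-- The free real vector space with basis the set of all words. -/
abbrev KA (d : ℕ) : Type := Word d →₀ ℝ

/-- Shuffle product of two words, as an element of `KA d`. -/
noncomputable def shuffleWord (d : ℕ) : Word d → Word d → KA d
  | [], v => Finsupp.single v 1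
  | a :: u, [] => Finsupp.single (a :: u) 1
  | a :: u, b :: v =>
      Finsupp.mapDomain (List.cons a) (shuffleWord d u (b :: v)) +
      Finsupp.mapDomain (List.cons b) (shuffleWord d (a :: u) v)
  termination_by u v => u.length + v.length

/-- Bilinear extension of the shuffle product to `KA d`. -/
noncomputable def sh (d : ℕ) (x y : KA d) : KA d :=
  x.sum fun u cu => y.sum fun v cv => (cu * cv) • shuffleWord d u v

/-- Admissible words: concatenations of blocks each of which is the single
letter `0` or a pair `aa` with `a ≠ 0`. -/
inductive Admissible (d : ℕ) : Word d → Prop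
  | nil : Admissible d []
  | zero {w : Word d} : Admissible d w → Admissible d (0 :: w)
  | pair {w : Word d} (a : Fin (d+1)) : a ≠ 0 → Admissible d w →
      Admissible d (a :: a :: w)

/-- Number of `0` letters. -/
def zc (d : ℕ) (w : Word d) : ℕ := w.count 0

/-- Half the number of nonzero letters. -/
def dc (d : ℕ) (w : Word d) : ℕ := (w.length - w.count 0) / 2

def nc (d : ℕ) (w : Word d) : ℕ := zc d w + dc d w

open Classical in
/-- The expectation map on words. -/
noncomputable def Ebar (d : ℕ) (t : ℝ) (w : Word d) : ℝ :=
  if Admissible d w then t ^ nc d w / (2 ^ dc d w * Nat.factorial (nc d w)) else 0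

/-- Linear extension of the expectation map to `KA d`. -/
noncomputable def EbarL (d : ℕ) (t : ℝ) (x : KA d) : ℝ :=
  x.sum fun w c => c * Ebar d t w

/-- The linear endomorphism of `KA d` determined by values on basis words. -/
noncomputable def wordLift (d : ℕ) (f : Word d → KA d) : KA d →ₗ[ℝ] KA d :=
  Finsupp.lsum ℝ fun w => LinearMap.toSpanSingleton ℝ (KA d) (f w)

/-- The identity endomorphism `id`. -/
noncomputable def idE (d : ℕ) : KA d →ₗ[ℝ] KA d := LinearMap.id

/-- The reversal endomorphism `|S|`. -/
noncomputable def revE (d : ℕ) : KA d →ₗ[ℝ] KA d :=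
  wordLift d fun w => Finsupp.single w.reverse 1

/-- The antipode `S`. -/
noncomputable def Sa (d : ℕ) : KA d →ₗ[ℝ] KA d :=
  wordLift d fun w => Finsupp.single w.reverse ((-1 : ℝ) ^ w.length)

/-- The convolution unit `ν`. -/
noncomputable def nuE (d : ℕ) : KA d →ₗ[ℝ] KA d :=
  wordLift d fun w => if w = [] then Finsupp.single ([] : Word d) 1 else 0

/-- The expectation endomorphism `E`. -/
noncomputable def EE (d : ℕ) (t : ℝ) : KA d →ₗ[ℝ] KA d :=
  wordLift d fun w => Finsupp.single ([] : Word d) (Ebar d t w)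

/-- The convolution product `X ⋆ Y`. -/
noncomputable def conv (d : ℕ) (X Y : KA d →ₗ[ℝ] KA d) : KA d →ₗ[ℝ] KA d :=
  wordLift d fun w => ∑ k ∈ Finset.range (w.length + 1),
    sh d (X (Finsupp.single (w.take k) 1)) (Y (Finsupp.single (w.drop k) 1))

/-- Convolution powers, `X^{⋆0} = ν`. -/
noncomputable def convPow (d : ℕ) (X : KA d →ₗ[ℝ] KA d) : ℕ → (KA d →ₗ[ℝ] KA d)
  | 0 => nuE d
  | k + 1 => conv d X (convPow d X k)

/-- The inner product `⟨X,Y⟩` of endomorphisms, taken over the words of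
length `n`, relative to the family of vectors `Vf`. -/
noncomputable def ip (d : ℕ) (t : ℝ) {H : Type*} [NormedAddCommGroup H]
    [InnerProductSpace ℝ H] (Vf : Word d → H) (n : ℕ)
    (X Y : KA d →ₗ[ℝ] KA d) : ℝ :=
  ∑ u : Fin n → Fin (d+1), ∑ v : Fin n → Fin (d+1),
    EbarL d t (sh d (X (Finsupp.single (List.ofFn u) 1))
                    (Y (Finsupp.single (List.ofFn v) 1))) *
      (inner ℝ (Vf (List.ofFn u)) (Vf (List.ofFn v)) : ℝ)

/-- Positive semidefiniteness of the expectation Gram matrix at grade `n`: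
indexed by the words of length `n` together with the empty word. -/
def gramPSD (d n : ℕ) (t : ℝ) : Prop :=
  ∀ c : Option (Fin n → Fin (d+1)) → ℝ,
    0 ≤ ∑ x : Option (Fin n → Fin (d+1)), ∑ y : Option (Fin n → Fin (d+1)),
      c x * c y *
        EbarL d t (shuffleWord d (x.elim ([] : Word d) List.ofFn)
                                 (y.elim ([] : Word d) List.ofFn))

/-!
Shuffles can equally be built by peeling off last letters, so reversal is a morphism of the
shuffle product: `rev (u ⧢ v) = rev u ⧢ rev v`. The expectation `Ē` is reversal-invariant,
since reversing an admissible word reverses its block decomposition and keeps the letter counts.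
-/

namespace Word

variable {d : ℕ}

lemma shuffleWord_nil_left (v : Word d) : shuffleWord d [] v = single v 1 := by
  cases v <;> rw [shuffleWord]

lemma shuffleWord_nil_right (u : Word d) : shuffleWord d u [] = single u 1 := by
  cases u <;> rw [shuffleWord]

lemma shuffleWord_cons_cons (a b : Fin (d + 1)) (u v : Word d) :
    shuffleWord d (a :: u) (b :: v) =
      mapDomain (List.cons a) (shuffleWord d u (b :: v)) +
      mapDomain (List.cons b) (shuffleWord d (a :: u) v) := by
  rw [shuffleWord]

theorem shuffleWord_append_singleton (a b : Fin (d + 1)) :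
    (u v : Word d) → shuffleWord d (u ++ [a]) (v ++ [b]) =
      mapDomain (· ++ [a]) (shuffleWord d u (v ++ [b])) +
      mapDomain (· ++ [b]) (shuffleWord d (u ++ [a]) v)
  | [], [] => by
      simp only [List.nil_append, shuffleWord_cons_cons, shuffleWord_nil_left,
        shuffleWord_nil_right, mapDomain_single, List.cons_append]
      abel
  | [], e :: v => by
      have ih := shuffleWord_append_singleton a b [] v
      simp only [List.nil_append, List.cons_append] at ih ⊢
      rw [shuffleWord_cons_cons, ih, shuffleWord_cons_cons]
      simp only [shuffleWord_nil_left, mapDomain_add, mapDomain_single, ← mapDomain_comp,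
        Function.comp_def, List.cons_append]
      abel
  | c :: u, [] => by
      have ih := shuffleWord_append_singleton a b u []
      simp only [List.nil_append, List.cons_append] at ih ⊢
      rw [shuffleWord_cons_cons, ih, shuffleWord_cons_cons]
      simp only [shuffleWord_nil_right, mapDomain_add, mapDomain_single, ← mapDomain_comp,
        Function.comp_def, List.cons_append]
      abel
  | c :: u, e :: v => by
      have ih₁ := shuffleWord_append_singleton a b u (e :: v)
      have ih₂ := shuffleWord_append_singleton a b (c :: u) v
      simp only [List.cons_append] at ih₁ ih₂ ⊢
      rw [shuffleWord_cons_cons, shuffleWord_cons_cons, shuffleWord_cons_cons, ih₁, ih₂]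
      simp only [mapDomain_add, ← mapDomain_comp, Function.comp_def, List.cons_append]
      abel
  termination_by u v => u.length + v.length

theorem mapDomain_reverse_shuffleWord :
    (u v : Word d) → mapDomain List.reverse (shuffleWord d u v) =
      shuffleWord d u.reverse v.reverse
  | [], v => by simp [shuffleWord_nil_left]
  | a :: u, [] => by simp [shuffleWord_nil_right]
  | a :: u, b :: v => by
      have reverse_comp_cons (c : Fin (d + 1)) :
          (List.reverse ∘ List.cons c : Word d → Word d) = (· ++ [c]) ∘ List.reverse :=
        funext fun _ => List.reverse_cons
      rw [shuffleWord_cons_cons, mapDomain_add, ← mapDomain_comp, ← mapDomain_comp,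
        reverse_comp_cons, reverse_comp_cons, mapDomain_comp, mapDomain_comp,
        mapDomain_reverse_shuffleWord u (b :: v), mapDomain_reverse_shuffleWord (a :: u) v]
      simp only [List.reverse_cons]
      rw [← shuffleWord_append_singleton]
  termination_by u v => u.length + v.length

end Word

namespace Admissible

variable {d : ℕ}

lemma append {u v : Word d} (hu : Admissible d u) (hv : Admissible d v) :
    Admissible d (u ++ v) := by
  induction hu with
  | nil => exact hv
  | zero _ ih => exact .zero ih
  | pair a ha _ ih => exact .pair a ha ih

lemma reverse {w : Word d} (h : Admissible d w) : Admissible d w.reverse := by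
  induction h with
  | nil => exact .nil
  | zero _ ih =>
      rw [List.reverse_cons]
      exact ih.append (.zero .nil)
  | pair a ha _ ih =>
      rw [List.reverse_cons, List.reverse_cons, List.append_assoc]
      exact ih.append (.pair a ha .nil)

lemma reverse_iff {w : Word d} : Admissible d w.reverse ↔ Admissible d w :=
  ⟨fun h => by simpa using h.reverse, reverse⟩

end Admissible

lemma Ebar_reverse (d : ℕ) (t : ℝ) (w : Word d) : Ebar d t w.reverse = Ebar d t w := by
  classical
  simp only [Ebar, nc, zc, dc, List.count_reverse, List.length_reverse,
    if_congr Admissible.reverse_iff rfl rfl]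

lemma EbarL_mapDomain {d : ℕ} {t : ℝ} {f : Word d → Word d}
    (hf : ∀ w, Ebar d t (f w) = Ebar d t w) (x : KA d) :
    EbarL d t (mapDomain f x) = EbarL d t x := by
  unfold EbarL
  rw [sum_mapDomain_index (fun _ => zero_mul _) (fun _ _ _ => add_mul _ _ _)]
  exact sum_congr fun w _ => by rw [hf]

theorem stmt_8_general (d : ℕ) (t : ℝ) (u v : Word d) :
    EbarL d t (shuffleWord d u v)
      = EbarL d t (shuffleWord d u.reverse v.reverse) := by
  rw [← Word.mapDomain_reverse_shuffleWord, EbarL_mapDomain (Ebar_reverse d t)]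

theorem stmt_8 (d : ℕ) (hd : 1 ≤ d) (t : ℝ) (ht : 0 < t) (u v : Word d) :
    EbarL d t (shuffleWord d u v)
      = EbarL d t (shuffleWord d u.reverse v.reverse) :=
  stmt_8_general d t u v
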